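/- Consider an IF neuron with threshold θ > 0, inputs I(1),...,I(T), initial potential v(0), spike train s(t) and potentials v(t), and suppose the neuron fires at least one spike (∃ t with s(t) = 1). Fix ε ∈ (0, θ) and define a second neuron with the same inputs but initial potential ṽ(0) = v(0) - max(θ, min{v(t) : s(t) = 1} + ε). Then there exists t₀ ∈ {1,...,T} such that ∑_{k=1}^{t₀} s(k) = ∑_{k=1}^{t₀} s̃(k) + 1, where s̃ is the spike train of the second neuron. -/
import Mathlib


open Finset

/-- Residual membrane potential of an IF neuron with soft reset:
`v 0 = v0`, `v t = v (t-1) + I t - s t * θ` where `s t = 1` iff `v (t-1) + I t ≥ θ`. -/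
noncomputable def ifV (θ v0 : ℝ) (I : ℕ → ℝ) : ℕ → ℝ
  | 0 => v0
  | t + 1 => ifV θ v0 I t + I (t + 1) -
      (if θ ≤ ifV θ v0 I t + I (t + 1) then θ else 0)

/-- Binary spike (as a real number) of the IF neuron at time-step `t ≥ 1`. -/
noncomputable def ifS (θ v0 : ℝ) (I : ℕ → ℝ) (t : ℕ) : ℝ :=
  if θ ≤ ifV θ v0 I (t - 1) + I t then 1 else 0

lemma ifS_succ (θ v0 : ℝ) (I : ℕ → ℝ) (t : ℕ) :
    ifS θ v0 I (t + 1) = if θ ≤ ifV θ v0 I t + I (t + 1) then 1 else 0 := rfl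

lemma ifS_mem (θ v0 : ℝ) (I : ℕ → ℝ) (t : ℕ) :
    ifS θ v0 I t = 0 ∨ ifS θ v0 I t = 1 := by
  unfold ifS; split <;> simp

lemma ifV_eq (θ v0 : ℝ) (I : ℕ → ℝ) : ∀ t,
    ifV θ v0 I t = v0 + ∑ k ∈ Icc 1 t, I k - θ * ∑ k ∈ Icc 1 t, ifS θ v0 I k
  | 0 => by simp [ifV]
  | t + 1 => by
    rw [show ifV θ v0 I (t + 1) = ifV θ v0 I t + I (t + 1) -
        (if θ ≤ ifV θ v0 I t + I (t + 1) then θ else 0) from rfl,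
      Finset.sum_Icc_succ_top (by omega : 1 ≤ t + 1),
      Finset.sum_Icc_succ_top (by omega : 1 ≤ t + 1),
      ifS_succ]
    by_cases h : θ ≤ ifV θ v0 I t + I (t + 1)
    · rw [if_pos h, if_pos h, ifV_eq θ v0 I t]; ring
    · rw [if_neg h, if_neg h, ifV_eq θ v0 I t]; ring

theorem stmt6 (θ : ℝ) (hθ : 0 < θ) (T : ℕ) (hT : 0 < T) (I : ℕ → ℝ)
    (v0 ε : ℝ) (hε : ε ∈ Set.Ioo 0 θ)
    (F : Finset ℕ)
    (hF : F = (Finset.Icc 1 T).filter (fun t => ifS θ v0 I t = 1))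
    (hne : F.Nonempty)
    (w0 : ℝ)
    (hw : w0 = v0 - max θ (F.inf' hne (fun t => ifV θ v0 I t) + ε)) :
    ∃ t0 ∈ Finset.Icc 1 T,
      ∑ k ∈ Finset.Icc 1 t0, ifS θ v0 I k =
        ∑ k ∈ Finset.Icc 1 t0, ifS θ w0 I k + 1 := by
  obtain ⟨hε0, hεθ⟩ := hε
  set m : ℝ := F.inf' hne (fun t => ifV θ v0 I t) with hm
  set c : ℝ := max θ (m + ε) with hc
  have hcθ : θ ≤ c := le_max_left _ _
  have hcm : m + ε ≤ c := le_max_right _ _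
  have hvw : v0 - w0 = c := by rw [hw]; ring
  -- difference of cumulative spike counts
  set D : ℕ → ℝ := fun t =>
    ∑ k ∈ Icc 1 t, ifS θ v0 I k - ∑ k ∈ Icc 1 t, ifS θ w0 I k with hD
  have hD0 : D 0 = 0 := by simp [hD]
  -- potential difference
  have hVd : ∀ t, ifV θ v0 I t - ifV θ w0 I t = c - θ * D t := by
    intro t
    rw [hD]
    have h1 := ifV_eq θ v0 I t
    have h2 := ifV_eq θ w0 I t
    rw [h1, h2]
    rw [← hvw]; ring
  have hDsucc : ∀ t, D (t + 1) = D t + (ifS θ v0 I (t + 1) - ifS θ w0 I (t + 1)) := by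
    intro t
    simp only [hD, Finset.sum_Icc_succ_top (by omega : 1 ≤ t + 1)]
    ring
  -- D is nat-valued
  have hnat : ∀ t, ∃ n : ℕ, D t = n := by
    intro t
    induction t with
    | zero => exact ⟨0, by simp [hD0]⟩
    | succ t ih =>
      obtain ⟨n, hn⟩ := ih
      rcases ifS_mem θ w0 I (t + 1) with hs' | hs'
      · rcases ifS_mem θ v0 I (t + 1) with hs | hs
        · exact ⟨n, by rw [hDsucc, hn, hs, hs']; ring⟩
        · exact ⟨n + 1, by rw [hDsucc, hn, hs, hs']; push_cast; ring⟩
      · rcases ifS_mem θ v0 I (t + 1) with hs | hs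
        · -- s' = 1, s = 0: need n ≥ 1
          have hn1 : 1 ≤ n := by
            by_contra h
            have hn0 : n = 0 := by omega
            -- D t = 0, so ifV v0 t = ifV w0 t + c ≥ ifV w0 t + θ
            have hV := hVd t
            rw [hn, hn0] at hV
            simp at hV
            -- spike of w neuron: θ ≤ ifV w0 t + I (t+1)
            rw [ifS_succ] at hs'
            have hw1 : θ ≤ ifV θ w0 I t + I (t + 1) := by
              by_contra hcon; rw [if_neg hcon] at hs'; norm_num at hs'
            have hv1 : θ ≤ ifV θ v0 I t + I (t + 1) := by
              have : ifV θ v0 I t = ifV θ w0 I t + c := by linarith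
              rw [this]; linarith
            rw [ifS_succ, if_pos hv1] at hs
            norm_num at hs
          refine ⟨n - 1, ?_⟩
          rw [hDsucc, hn, hs, hs']
          have : ((n - 1 : ℕ) : ℝ) = (n : ℝ) - 1 := by
            push_cast [hn1]; ring
          rw [this]; ring
        · exact ⟨n, by rw [hDsucc, hn, hs, hs']; ring⟩
  have hstep : ∀ t, D (t + 1) ≤ D t + 1 := by
    intro t
    rw [hDsucc]
    rcases ifS_mem θ v0 I (t + 1) with hs | hs <;>
      rcases ifS_mem θ w0 I (t + 1) with hs' | hs' <;>
        rw [hs, hs'] <;> linarith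
  -- the argmin spike time
  obtain ⟨ts, htsF, htsm⟩ := Finset.exists_mem_eq_inf' hne (fun t => ifV θ v0 I t)
  rw [hF, Finset.mem_filter, Finset.mem_Icc] at htsF
  obtain ⟨⟨hts1, htsT⟩, htsS⟩ := htsF
  obtain ⟨u, rfl⟩ : ∃ u, ts = u + 1 := ⟨ts - 1, by omega⟩
  -- the spike at ts: pre-potential = m + θ
  rw [ifS_succ] at htsS
  have hvspk : θ ≤ ifV θ v0 I u + I (u + 1) := by
    by_contra hcon; rw [if_neg hcon] at htsS; norm_num at htsS
  have hvval : ifV θ v0 I (u + 1) = ifV θ v0 I u + I (u + 1) - θ := by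
    rw [show ifV θ v0 I (u + 1) = ifV θ v0 I u + I (u + 1) -
        (if θ ≤ ifV θ v0 I u + I (u + 1) then θ else 0) from rfl, if_pos hvspk]
  have hpre : ifV θ v0 I u + I (u + 1) = m + θ := by
    have : m = ifV θ v0 I (u + 1) := htsm
    rw [this, hvval]; ring
  -- D reaches ≥ 1 by time u + 1
  have hge : ∃ t, t ≤ u + 1 ∧ 1 ≤ D t := by
    obtain ⟨n, hn⟩ := hnat u
    rcases Nat.eq_zero_or_pos n with hn0 | hn1
    · -- D u = 0; show second neuron doesn't spike at u+1
      refine ⟨u + 1, le_refl _, ?_⟩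
      have hV := hVd u
      rw [hn, hn0] at hV
      simp at hV
      have hwpre : ifV θ w0 I u + I (u + 1) = m + θ - c := by linarith
      have hw0' : ¬ θ ≤ ifV θ w0 I u + I (u + 1) := by
        rw [hwpre]; linarith
      have hs' : ifS θ w0 I (u + 1) = 0 := by rw [ifS_succ, if_neg hw0']
      have hs : ifS θ v0 I (u + 1) = 1 := by rw [ifS_succ, if_pos hvspk]
      rw [hDsucc, hn, hn0, hs, hs']
      norm_num
    · exact ⟨u, by omega, by rw [hn]; exact_mod_cast hn1⟩
  -- discrete IVT: least t with 1 ≤ D t satisfies D t = 1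
  obtain ⟨tw, htw, htw1⟩ := hge
  have hex : ∃ t, 1 ≤ D t := ⟨tw, htw1⟩
  classical
  set t0 := Nat.find hex with ht0
  have ht0p : 1 ≤ D t0 := Nat.find_spec hex
  have ht0le : t0 ≤ tw := Nat.find_le htw1
  have ht0ne : t0 ≠ 0 := by
    intro h
    rw [h, hD0] at ht0p; linarith
  obtain ⟨t1, ht1⟩ : ∃ t1, t0 = t1 + 1 := ⟨t0 - 1, by omega⟩
  have ht1lt : ¬ 1 ≤ D t1 := Nat.find_min hex (by omega)
  have ht10 : D t1 = 0 := by
    obtain ⟨n, hn⟩ := hnat t1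
    rw [hn] at ht1lt ⊢
    have : n = 0 := by
      by_contra h
      exact ht1lt (by exact_mod_cast Nat.one_le_iff_ne_zero.mpr h)
    rw [this]; norm_num
  have hD1 : D t0 = 1 := by
    have := hstep t1
    rw [← ht1, ht10] at this
    linarith
  refine ⟨t0, Finset.mem_Icc.mpr ⟨by omega, by omega⟩, ?_⟩
  have h2 : ∑ k ∈ Icc 1 t0, ifS θ v0 I k - ∑ k ∈ Icc 1 t0, ifS θ w0 I k = 1 := hD1
  linarith
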